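/- arXiv:2311.11266 — 2 statements merged into one kernel-verified Lean document; each statement's English description precedes it below -/
import Mathlib

section
/- Let A be a finitely generated abelian group with torsion subgroup T of cardinality t, and let h : A → ℝ≥0 be a quadratic form vanishing exactly on T, inducing a norm on the free quotient A/T ≅ ℤʳ viewed inside ℝʳ. Suppose h(P) ≥ c₁ > 0 for all P ∈ A \ T. Then for any X > 0, the number of P ∈ A with h(P) ≤ X is at most t · (1 + 2·sqrt(X/c₁))ʳ. -/
/-!
Put `m = ⌊2√(X/c₁)⌋ + 1`, so that `4X < m²c₁`. For `P, Q` of height at most `X` we have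
`h (P - Q) ≤ 4X`, whereas `P - Q ≡ m • x` modulo torsion with `x` non-torsion would give
`h (P - Q) = m² h x ≥ m²c₁`. Hence the points of height at most `X` in the lattice `A ⧸ T ≅ ℤʳ`
are pairwise incongruent modulo `m`, so there are at most `mʳ ≤ (1 + 2√(X/c₁))ʳ` of them, and
each has exactly `t` preimages in `A`.
-/

structure IsSqSeminorm {F : Type*} [AddCommGroup F] (g : F → ℝ) : Prop where
  nonneg : ∀ x, 0 ≤ g x
  map_zsmul : ∀ (n : ℤ) (x : F), g (n • x) = (n : ℝ) ^ 2 * g x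
  sqrt_add_le : ∀ x y, Real.sqrt (g (x + y)) ≤ Real.sqrt (g x) + Real.sqrt (g y)

namespace IsSqSeminorm

variable {F : Type*} [AddCommGroup F] {g : F → ℝ}

theorem of_comp {E : Type*} [AddCommGroup E] {π : E →+ F} (hπ : Function.Surjective π)
    (hg : IsSqSeminorm (g ∘ π)) : IsSqSeminorm g where
  nonneg := hπ.forall.2 hg.nonneg
  map_zsmul n := hπ.forall.2 fun x => by simpa using hg.map_zsmul n x
  sqrt_add_le := hπ.forall₂.2 fun x y => by simpa using hg.sqrt_add_le x y

theorem map_neg (hg : IsSqSeminorm g) (x : F) : g (-x) = g x := by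
  simpa using hg.map_zsmul (-1) x

theorem map_sub_le {X : ℝ} {x y : F} (hg : IsSqSeminorm g) (hx : g x ≤ X) (hy : g y ≤ X) :
    g (x - y) ≤ 4 * X := by
  have hX : 0 ≤ X := (hg.nonneg x).trans hx
  have hsqrt : Real.sqrt (g (x - y)) ≤ 2 * Real.sqrt X := by
    calc Real.sqrt (g (x - y)) ≤ Real.sqrt (g x) + Real.sqrt (g (-y)) := by
          simpa [sub_eq_add_neg] using hg.sqrt_add_le x (-y)
      _ ≤ Real.sqrt X + Real.sqrt X := by
          rw [hg.map_neg]; gcongr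
      _ = 2 * Real.sqrt X := by ring
  calc g (x - y) ≤ (2 * Real.sqrt X) ^ 2 := (Real.sqrt_le_left (by positivity)).1 hsqrt
    _ = 4 * X := by rw [mul_pow, Real.sq_sqrt hX]; norm_num

theorem eq_of_sub_eq_zsmul {X c : ℝ} {m : ℤ} {x y u : F} (hg : IsSqSeminorm g)
    (hlow : ∀ v ≠ 0, c ≤ g v) (hm : 4 * X < m ^ 2 * c) (hx : g x ≤ X) (hy : g y ≤ X)
    (hxy : x - y = m • u) : x = y := by
  by_contra hne
  have hu : u ≠ 0 := by
    rintro rfl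
    exact hne (sub_eq_zero.1 (by simpa using hxy))
  have : (m : ℝ) ^ 2 * c ≤ 4 * X := by
    calc (m : ℝ) ^ 2 * c ≤ m ^ 2 * g u := by gcongr; exact hlow u hu
      _ = g (x - y) := by rw [hxy, hg.map_zsmul]
      _ ≤ 4 * X := hg.map_sub_le hx hy
  linarith

end IsSqSeminorm

theorem Module.Basis.exists_sub_eq_zsmul {ι F : Type*} [Fintype ι] [AddCommGroup F]
    (b : Module.Basis ι ℤ F) {m : ℕ} {x y : F}
    (hxy : ∀ i, (b.repr x i : ZMod m) = b.repr y i) : ∃ u, x - y = (m : ℤ) • u := by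
  have hdvd : ∀ i, (m : ℤ) ∣ b.equivFun (x - y) i := fun i => by
    rw [← ZMod.intCast_zmod_eq_zero_iff_dvd]
    simpa [sub_eq_zero] using hxy i
  refine ⟨b.equivFun.symm fun i => b.equivFun (x - y) i / m, b.equivFun.injective ?_⟩
  ext i
  rw [map_zsmul, LinearEquiv.apply_symm_apply, Pi.smul_apply, smul_eq_mul,
    Int.mul_ediv_cancel' (hdvd i)]

theorem IsSqSeminorm.card_sublevel_le {ι F : Type*} [Fintype ι] [AddCommGroup F] {g : F → ℝ}
    (hg : IsSqSeminorm g) (b : Module.Basis ι ℤ F) {X c : ℝ} (hlow : ∀ v ≠ 0, c ≤ g v)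
    {m : ℕ} [NeZero m] (hm : 4 * X < m ^ 2 * c) :
    Nat.card {x // g x ≤ X} ≤ m ^ Fintype.card ι := by
  have hinj : Function.Injective fun x : {x // g x ≤ X} => fun i => (b.repr x i : ZMod m) := by
    rintro ⟨x, hx⟩ ⟨y, hy⟩ hxy
    obtain ⟨u, hu⟩ := b.exists_sub_eq_zsmul (congrFun hxy)
    exact Subtype.ext (hg.eq_of_sub_eq_zsmul hlow (by exact_mod_cast hm) hx hy hu)
  calc Nat.card {x // g x ≤ X} ≤ Nat.card (ι → ZMod m) := Nat.card_le_card_of_injective _ hinj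
    _ = m ^ Fintype.card ι := by simp [Nat.card_fun]

theorem Submodule.card_preimage_mk {R M : Type*} [Ring R] [AddCommGroup M] [Module R M]
    (p : Submodule R M) (s : Set (M ⧸ p)) :
    Nat.card (Submodule.Quotient.mk ⁻¹' s) = Nat.card p.toAddSubgroup * Nat.card s := by
  rw [← Nat.card_prod]
  exact Nat.card_congr (QuotientAddGroup.preimageMkEquivAddSubgroupProdSet _ s)

theorem exists_nat_le_one_add_two_sqrt {X c : ℝ} (hc : 0 < c) :
    ∃ m : ℕ, 0 < m ∧ (m : ℝ) ≤ 1 + 2 * Real.sqrt (X / c) ∧ 4 * X < m ^ 2 * c := by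
  set a := 2 * Real.sqrt (X / c)
  refine ⟨⌊a⌋₊ + 1, Nat.succ_pos _, ?_, ?_⟩
  · push_cast; linarith [Nat.floor_le (show 0 ≤ a by positivity)]
  · have hlt : Real.sqrt (X / c) < (⌊a⌋₊ + 1 : ℕ) / 2 := by
      have := Nat.lt_floor_add_one a; push_cast; linarith
    have := Real.lt_sq_of_sqrt_lt hlt
    rw [div_lt_iff₀ hc] at this
    linarith

theorem stmt_6_general {A : Type*} [AddCommGroup A] [AddGroup.FG A]
    (h : A → ℝ) (r t : ℕ)
    (hr : r = Module.finrank ℤ A)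
    (ht : t = Nat.card (AddCommGroup.torsion A))
    (hnonneg : ∀ x, 0 ≤ h x)
    (hinv : ∀ (x : A) (T : A), IsOfFinAddOrder T → h (x + T) = h x)
    (hquad : ∀ (n : ℤ) (x : A), h (n • x) = (n : ℝ) ^ 2 * h x)
    (htri : ∀ x y : A, Real.sqrt (h (x + y)) ≤ Real.sqrt (h x) + Real.sqrt (h y))
    (c₁ : ℝ) (hc₁ : 0 < c₁)
    (hlow : ∀ P : A, ¬ IsOfFinAddOrder P → c₁ ≤ h P)
    (X : ℝ) :
    (Nat.card {P : A // h P ≤ X} : ℝ) ≤ t * (1 + 2 * Real.sqrt (X / c₁)) ^ r := by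
  have : Module.Finite ℤ A := Module.Finite.iff_addGroup_fg.mpr ‹_›
  set T := Submodule.torsion ℤ A
  have mem_T (x : A) : x ∈ T ↔ IsOfFinAddOrder x := by
    rw [← Submodule.mem_toAddSubgroup, Submodule.torsion_int]; rfl
  let hbar : A ⧸ T → ℝ := Quotient.lift h fun x y hxy => by
    have hyx : IsOfFinAddOrder (y - x) :=
      (mem_T _).1 (neg_sub x y ▸ neg_mem ((Submodule.quotientRel_def _).1 hxy))
    simpa using (hinv x _ hyx).symm
  have hg : IsSqSeminorm hbar :=
    .of_comp (π := T.mkQ.toAddMonoidHom) T.mkQ_surjective ⟨hnonneg, hquad, htri⟩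
  have hlow' : ∀ q ≠ 0, c₁ ≤ hbar q := by
    rintro ⟨x⟩ hx
    exact hlow x fun hx' => hx ((Submodule.Quotient.mk_eq_zero _).2 ((mem_T x).2 hx'))
  obtain ⟨m, hm0, hm_le, hm⟩ := exists_nat_le_one_add_two_sqrt (X := X) hc₁
  have : NeZero m := ⟨hm0.ne'⟩
  have hQ := hg.card_sublevel_le (Module.finBasis ℤ (A ⧸ T)) hlow' hm
  rw [Fintype.card_fin, finrank_quotient_eq_of_le_torsion le_rfl, ← hr] at hQ
  have hA := T.card_preimage_mk {q | hbar q ≤ X}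
  rw [Submodule.torsion_int, ← ht] at hA
  calc (Nat.card {P // h P ≤ X} : ℝ) = t * Nat.card {q // hbar q ≤ X} := by exact_mod_cast hA
    _ ≤ t * m ^ r := by gcongr; exact_mod_cast hQ
    _ ≤ t * (1 + 2 * Real.sqrt (X / c₁)) ^ r := by gcongr

/-- Let `A` be a finitely generated abelian group of rank `r` with torsion subgroup of size
`t`, and `h : A → ℝ` a nonnegative function, invariant under translation by torsion
elements, with `h(n•x) = n²·h(x)` and `√∘h` subadditive (so that `√∘h` induces a norm on
the free quotient), vanishing exactly on torsion, and with `h(P) ≥ c₁ > 0` for all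
non-torsion `P`. Then for any `X > 0`, `#{P ∈ A : h(P) ≤ X} ≤ t·(1 + 2√(X/c₁))^r`. -/
theorem stmt_6 {A : Type*} [AddCommGroup A] [AddGroup.FG A]
    (h : A → ℝ) (r t : ℕ)
    (hr : r = Module.finrank ℤ A)
    (ht : t = Nat.card (AddCommGroup.torsion A))
    (hnonneg : ∀ x, 0 ≤ h x)
    (hinv : ∀ (x : A) (T : A), IsOfFinAddOrder T → h (x + T) = h x)
    (hquad : ∀ (n : ℤ) (x : A), h (n • x) = (n : ℝ) ^ 2 * h x)
    (htri : ∀ x y : A, Real.sqrt (h (x + y)) ≤ Real.sqrt (h x) + Real.sqrt (h y))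
    (hvanish : ∀ x : A, h x = 0 ↔ IsOfFinAddOrder x)
    (c₁ : ℝ) (hc₁ : 0 < c₁)
    (hlow : ∀ P : A, ¬ IsOfFinAddOrder P → c₁ ≤ h P)
    (X : ℝ) (hX : 0 < X) :
    (Nat.card {P : A // h P ≤ X} : ℝ) ≤ t * (1 + 2 * Real.sqrt (X / c₁)) ^ r :=
  stmt_6_general h r t hr ht hnonneg hinv hquad htri c₁ hc₁ hlow X
end

section
/- If p(n) denotes the product of the first n primes (the primorial), then p(n) ≥ nⁿ for all integers n ≥ 13. -/
/-!
Induction on `n`, starting from the numerical check `13¹³ ≤ 2·3·5⋯41`.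
Since `(1 + 1/n)ⁿ < e < 3`, the step needs only `p_{n+1} ≥ 3(n + 1)`, i.e. `π'(3(n + 1)) ≤ n`.
All primes above `5` lie in the `φ(30) = 8` residue classes prime to `30`, so `π'(N) ≲ 8N/30`,
which settles `n ≥ 53`; the cases `13 ≤ n < 53` are checked directly.
-/

open Finset Nat
open scoped Nat.Prime

theorem prod_range_nth_eq_prod_filter {p : ℕ → Prop} [DecidablePred p] (hp : {x | p x}.Infinite)
    (n : ℕ) : ∏ i ∈ range n, nth p i = ∏ x ∈ range (nth p n) with p x, x := by
  induction n with
  | zero =>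
    have hempty : #{x ∈ range (nth p 0) | p x} = 0 := by
      rw [← count_eq_card_filter_range, count_nth_zero]
    rw [prod_range_zero, card_eq_zero.1 hempty, prod_empty]
  | succ n ih =>
    rw [prod_range_succ, ih, filter_range_nth_eq_insert_of_infinite hp, prod_insert (by simp),
      mul_comm]

theorem nth_prime_thirteen : nth Nat.Prime 13 = 43 :=
  nth_count (p := Nat.Prime) (n := 43) (by norm_num)

set_option maxRecDepth 4000 in
theorem primeCounting'_three_mul_succ_le {k : ℕ} (hk : 13 ≤ k) : π' (3 * (k + 1)) ≤ k := by
  rcases lt_or_ge k 53 with hsmall | hlarge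
  · have hcheck : ∀ k ∈ Ico 13 53, π' (3 * (k + 1)) ≤ k := by decide
    exact hcheck k (mem_Ico.2 ⟨hk, hsmall⟩)
  · have hmod30 :=
      primeCounting'_add_le (a := 30) (k := 31) (by norm_num) (by norm_num) (3 * k - 28)
    have hπ31 : π' 31 = 10 := by decide
    have hφ30 : φ 30 = 8 := by decide
    rw [hπ31, hφ30, show 31 + (3 * k - 28) = 3 * (k + 1) by omega] at hmod30
    omega

theorem three_mul_succ_le_nth_prime {k : ℕ} (hk : 13 ≤ k) : 3 * (k + 1) ≤ nth Nat.Prime k :=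
  (count_le_iff_le_nth infinite_setOfPred_prime).1 (primeCounting'_three_mul_succ_le hk)

theorem succ_pow_le_three_mul_pow (n : ℕ) : (n + 1) ^ n ≤ 3 * n ^ n := by
  rcases n.eq_zero_or_pos with rfl | hn
  · norm_num
  have hn' : (0 : ℝ) < n := by exact_mod_cast hn
  have hfactor : ((n : ℝ) + 1) ^ n = n ^ n * (1 + (n : ℝ)⁻¹) ^ n := by
    rw [← mul_pow]
    field_simp
  have hreal : ((n : ℝ) + 1) ^ n ≤ 3 * n ^ n := by
    rw [hfactor, mul_comm 3]
    gcongr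
    exact Real.one_add_inv_pow_le_exp.trans (Real.exp_one_lt_d9.trans (by norm_num)).le
  exact_mod_cast hreal

/-- If `p(n)` is the product of the first `n` primes, then `p(n) ≥ n^n` for all `n ≥ 13`. -/
theorem stmt_16 (n : ℕ) (hn : 13 ≤ n) :
    n ^ n ≤ ∏ i ∈ Finset.range n, Nat.nth Nat.Prime i := by
  induction n, hn using Nat.le_induction with
  | base =>
    rw [prod_range_nth_eq_prod_filter infinite_setOfPred_prime, nth_prime_thirteen]
    decide
  | succ n hn ih =>
    calc (n + 1) ^ (n + 1) = (n + 1) ^ n * (n + 1) := pow_succ _ _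
      _ ≤ 3 * n ^ n * (n + 1) := Nat.mul_le_mul_right _ (succ_pow_le_three_mul_pow n)
      _ = n ^ n * (3 * (n + 1)) := by ring
      _ ≤ (∏ i ∈ range n, nth Nat.Prime i) * nth Nat.Prime n :=
        Nat.mul_le_mul ih (three_mul_succ_le_nth_prime hn)
      _ = ∏ i ∈ range (n + 1), nth Nat.Prime i := (prod_range_succ _ _).symm
end
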